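/- If R is S-coherent, then every finitely generated R-submodule of a free R-module is S-finitely presented. -/

import Mathlib

def IsSFinite {R : Type*} [CommRing R] (S : Submonoid R) (M : Type*) [AddCommGroup M]
    [Module R M] : Prop :=
  ∃ s ∈ S, ∃ N : Submodule R M, N.FG ∧ ∀ m : M, s • m ∈ N

def IsSFinitelyPresented {R : Type*} [CommRing R] (S : Submonoid R) (M : Type*)
    [AddCommGroup M] [Module R M] : Prop :=
  ∃ (n : ℕ) (f : (Fin n → R) →ₗ[R] M), Function.Surjective f ∧ IsSFinite S (LinearMap.ker f)

/-- An ideal `I` is `S`-finite: `s • I ⊆ J ⊆ I` for some finitely generated ideal `J`, `s ∈ S`. -/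
def IsSFiniteIdeal {R : Type*} [CommRing R] (S : Submonoid R) (I : Ideal R) : Prop :=
  ∃ s ∈ S, ∃ J : Ideal R, J.FG ∧ J ≤ I ∧ ∀ x ∈ I, s * x ∈ J

/-- `R` is `S`-coherent if every finitely generated ideal is `S`-finitely presented. -/
def IsSCoherentRing (R : Type*) [CommRing R] (S : Submonoid R) : Prop :=
  ∀ I : Ideal R, I.FG → IsSFinitelyPresented S ↥I

universe u v

/-!
A finitely generated submodule of a free module embeds in some `Rⁿ`, so it suffices that every
finitely generated submodule of `Rⁿ` is `S`-finitely presented. This property holds for `R` by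
`S`-coherence, passes to submodules, and passes to products `M × M'` by an `S`-version of
Schanuel's lemma: a submodule of `M × M'` is an extension of its image in `M'` by a submodule
of `M`, and both pieces are `S`-finitely presented.
-/

section

variable {R : Type*} [CommRing R] {S : Submonoid R} {M P : Type*}
  [AddCommGroup M] [Module R M] [AddCommGroup P] [Module R P]

theorem isSFinite_submodule_iff (N : Submodule R M) :
    IsSFinite S N ↔ ∃ s ∈ S, ∃ K : Submodule R M, K.FG ∧ K ≤ N ∧ ∀ x ∈ N, s • x ∈ K := by
  constructor
  · rintro ⟨s, hs, K, hK, hsK⟩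
    refine ⟨s, hs, K.map N.subtype, hK.map _, ?_, fun x hx => ⟨_, hsK ⟨x, hx⟩, rfl⟩⟩
    rintro _ ⟨y, -, rfl⟩
    exact y.2
  · rintro ⟨s, hs, K, hK, hKN, hsK⟩
    refine ⟨s, hs, K.comap N.subtype, ?_, fun x => hsK x x.2⟩
    apply Submodule.fg_of_fg_map_injective N.subtype N.injective_subtype
    rwa [Submodule.map_comap_subtype, inf_eq_right.mpr hKN]

theorem IsSFinite.map {N : Submodule R P} (hN : IsSFinite S N) (f : P →ₗ[R] M) :
    IsSFinite S (N.map f) := by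
  obtain ⟨s, hs, K, hK, hKN, hsK⟩ := (isSFinite_submodule_iff N).mp hN
  refine (isSFinite_submodule_iff _).mpr ⟨s, hs, K.map f, hK.map f, Submodule.map_mono hKN, ?_⟩
  rintro _ ⟨x, hx, rfl⟩
  exact ⟨s • x, hsK x hx, map_smul f s x⟩

theorem IsSFinitelyPresented.of_linearEquiv {M' : Type*} [AddCommGroup M'] [Module R M']
    (hM : IsSFinitelyPresented S M) (e : M ≃ₗ[R] M') : IsSFinitelyPresented S M' := by
  obtain ⟨n, f, hf, hker⟩ := hM
  refine ⟨n, e.toLinearMap ∘ₗ f, e.surjective.comp hf, ?_⟩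
  rwa [LinearMap.ker_comp, LinearEquiv.ker, Submodule.comap_bot]

/-- Schanuel's lemma: with `p : Rⁿ → M` a presentation with `S`-finite kernel and `u`, `v`
lifts of `f` and `p` through each other, `ker f = v (ker p) + range (id - v ∘ u)`. -/
theorem IsSFinitelyPresented.isSFinite_ker_of_projective [Module.Finite R P]
    [Module.Projective R P] (hM : IsSFinitelyPresented S M) (f : P →ₗ[R] M)
    (hf : Function.Surjective f) : IsSFinite S (LinearMap.ker f) := by
  obtain ⟨n, p, hp, hker⟩ := hM
  obtain ⟨s, hs, K, hK, hKp, hsK⟩ := (isSFinite_submodule_iff _).mp hker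
  obtain ⟨u, hu⟩ := Module.projective_lifting_property p f hp
  obtain ⟨v, hv⟩ := Module.projective_lifting_property f p hf
  have hu' (x : P) : p (u x) = f x := LinearMap.congr_fun hu x
  have hv' (y : Fin n → R) : f (v y) = p y := LinearMap.congr_fun hv y
  let w : P →ₗ[R] P := LinearMap.id - v ∘ₗ u
  refine (isSFinite_submodule_iff _).mpr
    ⟨s, hs, K.map v ⊔ LinearMap.range w, (hK.map v).sup (Submodule.fg_range w), ?_, ?_⟩
  · refine sup_le ?_ ?_
    · rintro _ ⟨y, hy, rfl⟩
      simpa [LinearMap.mem_ker, hv'] using hKp hy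
    · rintro _ ⟨x, rfl⟩
      simp [w, LinearMap.mem_ker, hv', hu']
  · intro x hx
    have hux : s • u x ∈ K := hsK _ (by simpa [LinearMap.mem_ker, hu'] using hx)
    have hdecomp : s • x = v (s • u x) + w (s • x) := by
      simp only [w, map_smul, LinearMap.sub_apply, LinearMap.id_apply, LinearMap.comp_apply,
        smul_sub]
      abel
    rw [hdecomp]
    exact Submodule.add_mem_sup (Submodule.mem_map_of_mem hux) (LinearMap.mem_range_self w _)

theorem IsSFinitelyPresented.isSFinite_ker [Module.Finite R P] (hM : IsSFinitelyPresented S M)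
    (f : P →ₗ[R] M) (hf : Function.Surjective f) : IsSFinite S (LinearMap.ker f) := by
  obtain ⟨n, v, hv⟩ := Module.Finite.exists_fin' R P
  have hker := hM.isSFinite_ker_of_projective (f ∘ₗ v) (hf.comp hv)
  rw [LinearMap.ker_comp] at hker
  rw [← Submodule.map_comap_eq_of_surjective hv (LinearMap.ker f)]
  exact hker.map v

theorem isSFinite_ker_of_smul_mem {φ : P →ₗ[R] M} {K : Submodule R P} (hK : K.FG) {s : R}
    (hs : s ∈ S) (hsK : ∀ x ∈ LinearMap.ker φ, s • x ∈ K)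
    (hφK : IsSFinitelyPresented S (K.map φ)) : IsSFinite S (LinearMap.ker φ) := by
  have := Module.Finite.iff_fg.mpr hK
  obtain ⟨t, ht, L, hL, hLker, htL⟩ := (isSFinite_submodule_iff _).mp
    (hφK.isSFinite_ker (φ.submoduleMap K) (φ.submoduleMap_surjective K))
  refine (isSFinite_submodule_iff _).mpr
    ⟨t * s, S.mul_mem ht hs, L.map K.subtype, hL.map _, ?_, fun x hx => ?_⟩
  · rintro _ ⟨y, hy, rfl⟩
    exact congrArg Subtype.val (hLker hy)
  · have hsx : (⟨s • x, hsK x hx⟩ : K) ∈ LinearMap.ker (φ.submoduleMap K) := by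
      ext
      simp [LinearMap.mem_ker.mp hx]
    exact ⟨_, htL _ hsx, by simp [mul_smul]⟩

end

/-- Unlike the usual notion of a coherent module, `M` itself need not be finitely generated. -/
def IsSCoherentModule {R : Type*} [CommRing R] (S : Submonoid R) (M : Type*) [AddCommGroup M]
    [Module R M] : Prop :=
  ∀ N : Submodule R M, N.FG → IsSFinitelyPresented S N

theorem IsSCoherentRing.isSCoherentModule {R : Type*} [CommRing R] {S : Submonoid R}
    (h : IsSCoherentRing R S) : IsSCoherentModule S R := h

namespace IsSCoherentModule

variable {R : Type*} [CommRing R] {S : Submonoid R} {M M' : Type*}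
  [AddCommGroup M] [Module R M] [AddCommGroup M'] [Module R M']

theorem isSFinitelyPresented_of_injective (h : IsSCoherentModule S M') [Module.Finite R M]
    {f : M →ₗ[R] M'} (hf : Function.Injective f) : IsSFinitelyPresented S M :=
  (h _ (Submodule.fg_range f)).of_linearEquiv (LinearEquiv.ofInjective f hf).symm

theorem of_injective (h : IsSCoherentModule S M') {f : M →ₗ[R] M'} (hf : Function.Injective f) :
    IsSCoherentModule S M := fun N hN =>
  have := Module.Finite.iff_fg.mpr hN
  h.isSFinitelyPresented_of_injective (f := f ∘ₗ N.subtype) (hf.comp N.injective_subtype)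

theorem prod (h : IsSCoherentModule S M) (h' : IsSCoherentModule S M') :
    IsSCoherentModule S (M × M') := by
  intro N hN
  have := Module.Finite.iff_fg.mpr hN
  obtain ⟨k, f, hf⟩ := Module.Finite.exists_fin' R N
  refine ⟨k, f, hf, ?_⟩
  let ψ := LinearMap.snd R M M' ∘ₗ N.subtype ∘ₗ f
  obtain ⟨s, hs, K, hK, hKψ, hsK⟩ := (isSFinite_submodule_iff _).mp
    ((h' _ (Submodule.fg_range ψ)).isSFinite_ker ψ.rangeRestrict ψ.surjective_rangeRestrict)
  rw [LinearMap.ker_rangeRestrict] at hKψ hsK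
  refine isSFinite_ker_of_smul_mem hK hs (fun x hx => hsK x ?_) ?_
  · simp [ψ, LinearMap.mem_ker.mp hx]
  · have := Module.Finite.iff_fg.mpr (hK.map f)
    refine h.isSFinitelyPresented_of_injective
      (f := LinearMap.fst R M M' ∘ₗ N.subtype ∘ₗ (K.map f).subtype) ?_
    refine (injective_iff_map_eq_zero _).mpr ?_
    rintro ⟨_, y, hy, rfl⟩ hfst
    have hsnd : ((f y : N) : M × M').2 = 0 := hKψ hy
    ext : 2
    exact Prod.ext hfst hsnd

end IsSCoherentModule

theorem isSCoherentModule_pi {R : Type*} [CommRing R] {S : Submonoid R}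
    (h : IsSCoherentRing R S) (ι : Type*) [Finite ι] : IsSCoherentModule S (ι → R) := by
  refine Finite.induction_empty_option (P := fun ι => IsSCoherentModule S (ι → R))
    (fun e hα => hα.of_injective (LinearEquiv.funCongrLeft R R e).injective) ?_ ?_ ι
  · exact h.isSCoherentModule.of_injective (f := 0) (Function.injective_of_subsingleton _)
  · intro α _ hα
    exact (h.isSCoherentModule.prod hα).of_injective
      (LinearEquiv.piOptionEquivProd R).injective

theorem Module.Basis.exists_finset_injective_of_fg {R : Type*} [CommRing R] {ι F : Type*}
    [AddCommGroup F] [Module R F] (b : Module.Basis ι R F) {N : Submodule R F} (hN : N.FG) :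
    ∃ (s : Finset ι) (f : N →ₗ[R] (s → R)), Function.Injective f := by
  classical
  obtain ⟨T, rfl⟩ := hN
  let s := T.biUnion fun t => (b.repr t).support
  have hsupp : Submodule.span R (T : Set F) ≤
      (Finsupp.supported R R (s : Set ι)).comap b.repr.toLinearMap :=
    Submodule.span_le.mpr fun t ht => (Finsupp.mem_supported R _).mpr <| by
      exact_mod_cast Finset.subset_biUnion_of_mem (fun t => (b.repr t).support) ht
  let e := Finsupp.supportedEquivFinsupp (M := R) (R := R) (s : Set ι) ≪≫ₗ
    Finsupp.linearEquivFunOnFinite R R s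
  let c := (b.repr.toLinearMap ∘ₗ (Submodule.span R (T : Set F)).subtype).codRestrict
    (Finsupp.supported R R (s : Set ι)) fun x => hsupp x.2
  refine ⟨s, e.toLinearMap ∘ₗ c, e.injective.comp ?_⟩
  exact (LinearMap.injective_codRestrict_iff _).mpr
    (b.repr.injective.comp (Submodule.injective_subtype _))

theorem sfp_submodule_of_free_of_scoherent {R : Type u} [CommRing R] (S : Submonoid R)
    (h : IsSCoherentRing R S) :
    ∀ (F : Type v) [AddCommGroup F] [Module R F], Module.Free R F →
      ∀ N : Submodule R F, N.FG → IsSFinitelyPresented S ↥N := by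
  intro F _ _ _ N hN
  have := Module.Finite.iff_fg.mpr hN
  obtain ⟨s, f, hf⟩ := (Module.Free.chooseBasis R F).exists_finset_injective_of_fg hN
  exact (isSCoherentModule_pi h s).isSFinitelyPresented_of_injective hf
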